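/- Let G be a finite graph with arboricity a ≥ 2 and n vertices, and ε with 0 < ε ≤ 2. With G_i defined by iteratively removing all vertices of degree at most (2+ε)·a, after i = ⌈(2/ε)·log₂ a⌉ iterations the remaining graph G_i has at most (2/(2+ε))^i · n · a ≤ C·n edges for a constant C depending only on ε. -/

import Mathlib

open Finset
open scoped Classical

/-- `G` admits a partition of its edge set into at most `a` forests. -/
def HasForestDecomp {V : Type*} (G : SimpleGraph V) (a : ℕ) : Prop :=
  ∃ F : Fin a → SimpleGraph V,
    (∀ i, F i ≤ G ∧ (F i).IsAcyclic) ∧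
    ∀ e ∈ G.edgeSet, ∃! i, e ∈ (F i).edgeSet

/-- The arboricity of a graph: the minimum number of forests partitioning its edge set. -/
noncomputable def arboricity {V : Type*} (G : SimpleGraph V) : ℕ :=
  sInf {a | HasForestDecomp G a}

/-- `peel G a ε i` is the vertex set of the graph `G_i`: `G_0 = G`, and `G_{i+1}` is the
subgraph of `G_i` induced by the vertices whose degree in `G_i` exceeds `(2+ε)·a`,
i.e. `G_{i+1}` is obtained by removing all vertices of degree at most `(2+ε)·a`. -/
noncomputable def peel {V : Type*} [Fintype V] (G : SimpleGraph V) (a : ℕ) (ε : ℝ) :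
    ℕ → Finset V
  | 0 => Finset.univ
  | (i + 1) => (peel G a ε i).filter
      (fun v => (2 + ε) * a < (((peel G a ε i).filter (fun u => G.Adj v u)).card : ℝ))

/-- The number of edges of `G` with both endpoints in `S`, i.e. the number of edges of
the subgraph of `G` induced by `S`. -/
noncomputable def inducedEdgeCount {V : Type*} [Fintype V] [DecidableEq V]
    (G : SimpleGraph V) [DecidableRel G.Adj] (S : Finset V) : ℕ :=
  (G.edgeFinset.filter (fun e => ∀ v ∈ e, v ∈ S)).card

/-! A forest has fewer edges than vertices, so a graph of arboricity `a` has at most `a·|S|`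
edges inside any vertex set `S`. The degrees within `G_i` therefore sum to at most `2a·|G_i|`,
so at most a `2/(2+ε)` fraction of the vertices of `G_i` have degree above `(2+ε)·a`, and
`|G_i| ≤ (2/(2+ε))^i·n`. For `i = ⌈(2/ε)·log₂ a⌉` Bernoulli's inequality `2^(ε/2) ≤ 1 + ε/2`
gives `a ≤ (1 + ε/2)^i`, so `C = 1` works. -/

namespace SimpleGraph

variable {V : Type*}

theorem IsAcyclic.card_edgeFinset_le [Fintype V] {F : SimpleGraph V} [Fintype F.edgeSet]
    (hF : F.IsAcyclic) : #F.edgeFinset ≤ Fintype.card V := by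
  cases isEmpty_or_nonempty V
  · simp [edgeFinset_eq_empty.mpr (Subsingleton.elim F ⊥)]
  obtain ⟨T, hFT, -, hT⟩ := connected_top.exists_isTree_le_of_le_of_isAcyclic le_top hF
  classical
  calc #F.edgeFinset ≤ #T.edgeFinset := card_le_card (edgeFinset_mono hFT)
    _ ≤ Fintype.card V := by rw [← hT.card_edgeFinset]; exact Nat.le_succ _

theorem IsAcyclic.card_filter_edgeFinset_le [Fintype V] [DecidableEq V] {F : SimpleGraph V}
    [DecidableRel F.Adj] (hF : F.IsAcyclic) (s : Finset V) :
    #{e ∈ F.edgeFinset | e.toFinset ⊆ s} ≤ #s := by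
  rw [card_filter_edgeFinset_toFinset_subset, ← Fintype.card_coe s]
  exact (hF.induce s).card_edgeFinset_le

theorem isAcyclic_fromEdgeSet_singleton (e : Sym2 V) : (fromEdgeSet {e}).IsAcyclic := by
  induction e with
  | _ u v =>
    change (edge u v).IsAcyclic
    by_cases huv : u = v
    · simp [huv, edge_self_eq_bot]
    simpa using isAcyclic_bot.sup_edge_of_not_reachable (reachable_bot.not.mpr huv)

end SimpleGraph

open SimpleGraph

section ForestDecomp

variable {V : Type*}

theorem hasForestDecomp_card_edgeFinset (G : SimpleGraph V) [Fintype G.edgeSet] :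
    HasForestDecomp G #G.edgeFinset := by
  set e : Fin #G.edgeFinset → Sym2 V := fun i => G.edgeFinset.equivFin.symm i
  have he : ∀ i, e i ∈ G.edgeSet := fun i => mem_edgeFinset.mp (G.edgeFinset.equivFin.symm i).2
  refine ⟨fun i => fromEdgeSet {e i}, fun i => ⟨?_, isAcyclic_fromEdgeSet_singleton _⟩, ?_⟩
  · exact G.fromEdgeSet_le.mpr (by simpa using Or.inr (he i))
  · intro f hf
    refine ⟨G.edgeFinset.equivFin ⟨f, mem_edgeFinset.mpr hf⟩, ?_, fun i hi => ?_⟩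
    · simp [e, G.not_isDiag_of_mem_edgeSet hf]
    · simp only [edgeSet_fromEdgeSet, Set.mem_sdiff, Set.mem_singleton_iff] at hi
      obtain ⟨rfl, -⟩ := hi
      simp [e]

theorem hasForestDecomp_arboricity [Fintype V] (G : SimpleGraph V) :
    HasForestDecomp G (arboricity G) :=
  Nat.sInf_mem (s := {a | HasForestDecomp G a}) ⟨_, hasForestDecomp_card_edgeFinset G⟩

section InducedEdgeCount

variable [Fintype V] [DecidableEq V]

theorem inducedEdgeCount_eq_card_filter (G : SimpleGraph V) [DecidableRel G.Adj] (S : Finset V) :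
    inducedEdgeCount G S = #{e ∈ G.edgeFinset | e.toFinset ⊆ S} := by
  simp only [inducedEdgeCount, subset_iff, Sym2.mem_toFinset]

theorem inducedEdgeCount_le_mul_card {G : SimpleGraph V} [DecidableRel G.Adj] {a : ℕ}
    (hG : HasForestDecomp G a) (S : Finset V) : inducedEdgeCount G S ≤ a * #S := by
  obtain ⟨F, hF, hcover⟩ := hG
  have hsub : {e ∈ G.edgeFinset | e.toFinset ⊆ S} ⊆
      univ.biUnion fun i => {e ∈ (F i).edgeFinset | e.toFinset ⊆ S} := by
    intro e he
    rw [mem_filter, mem_edgeFinset] at he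
    obtain ⟨i, hi, -⟩ := hcover e he.1
    exact mem_biUnion.mpr ⟨i, mem_univ _, mem_filter.mpr ⟨mem_edgeFinset.mpr hi, he.2⟩⟩
  rw [inducedEdgeCount_eq_card_filter]
  calc _ ≤ _ := card_le_card hsub
    _ ≤ ∑ i, #{e ∈ (F i).edgeFinset | e.toFinset ⊆ S} := card_biUnion_le
    _ ≤ ∑ _i : Fin a, #S := sum_le_sum fun i _ => (hF i).2.card_filter_edgeFinset_le S
    _ = a * #S := by simp

theorem sum_card_filter_adj_eq_two_mul_inducedEdgeCount (G : SimpleGraph V) [DecidableRel G.Adj]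
    (S : Finset V) : ∑ v ∈ S, #{u ∈ S | G.Adj v u} = 2 * inducedEdgeCount G S := by
  rw [inducedEdgeCount_eq_card_filter, card_filter_edgeFinset_toFinset_subset,
    ← sum_degrees_eq_twice_card_edges, ← sum_coe_sort S]
  refine sum_congr rfl fun v _ => ?_
  have h := congrArg card (map_neighborFinset_induce (G := G) (s := (S : Set V)) v)
  rw [card_map, card_neighborFinset_eq_degree] at h
  convert h.symm using 2
  ext u
  simp [and_comm]

end InducedEdgeCount

end ForestDecomp

section Peel

variable {V : Type*} [Fintype V] {G : SimpleGraph V} [DecidableRel G.Adj] {a : ℕ} {ε : ℝ}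

theorem lt_card_filter_adj_of_mem_peel_succ {i : ℕ} {v : V} (hv : v ∈ peel G a ε (i + 1)) :
    (2 + ε) * a < #{u ∈ peel G a ε i | G.Adj v u} := by
  rw [peel, mem_filter] at hv
  -- `peel` decides adjacency classically, not with the given `DecidableRel G.Adj`
  convert hv.2

theorem card_peel_succ_le [DecidableEq V] (hG : ∀ S, inducedEdgeCount G S ≤ a * #S) (ha : 0 < a)
    (hε : 0 < 2 + ε) (i : ℕ) :
    (#(peel G a ε (i + 1)) : ℝ) ≤ 2 / (2 + ε) * #(peel G a ε i) := by
  set S := peel G a ε i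
  set T := peel G a ε (i + 1)
  have hTS : T ⊆ S := filter_subset _ _
  have key : (a : ℝ) * ((2 + ε) * #T) ≤ a * (2 * #S) :=
    calc (a : ℝ) * ((2 + ε) * #T) = #T • ((2 + ε) * a) := by rw [nsmul_eq_mul]; ring
      _ ≤ ∑ v ∈ T, (#{u ∈ S | G.Adj v u} : ℝ) :=
        card_nsmul_le_sum _ _ _ fun v hv => (lt_card_filter_adj_of_mem_peel_succ hv).le
      _ ≤ ∑ v ∈ S, (#{u ∈ S | G.Adj v u} : ℝ) :=
        sum_le_sum_of_subset_of_nonneg hTS fun _ _ _ => by positivity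
      _ = 2 * inducedEdgeCount G S := by
        exact_mod_cast sum_card_filter_adj_eq_two_mul_inducedEdgeCount G S
      _ ≤ 2 * (a * #S) := by gcongr; exact_mod_cast hG S
      _ = a * (2 * #S) := by ring
  rw [div_mul_eq_mul_div, le_div_iff₀ hε, mul_comm]
  exact le_of_mul_le_mul_left key (by exact_mod_cast ha)

theorem card_peel_le_pow [DecidableEq V] (hG : ∀ S, inducedEdgeCount G S ≤ a * #S) (ha : 0 < a)
    (hε : 0 < 2 + ε) (i : ℕ) :
    (#(peel G a ε i) : ℝ) ≤ (2 / (2 + ε)) ^ i * Fintype.card V := by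
  induction i with
  | zero => simp [peel]
  | succ i ih =>
    calc (#(peel G a ε (i + 1)) : ℝ) ≤ 2 / (2 + ε) * #(peel G a ε i) :=
          card_peel_succ_le hG ha hε i
      _ ≤ 2 / (2 + ε) * ((2 / (2 + ε)) ^ i * Fintype.card V) := by gcongr
      _ = (2 / (2 + ε)) ^ (i + 1) * Fintype.card V := by ring

end Peel

theorem le_one_add_half_pow_ceil_logb {ε : ℝ} (hε0 : 0 < ε) (hε2 : ε ≤ 2) {x : ℝ} (hx : 0 < x) :
    x ≤ (1 + ε / 2) ^ ⌈(2 / ε) * Real.logb 2 x⌉₊ := by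
  set n := ⌈(2 / ε) * Real.logb 2 x⌉₊
  have hbase : (2 : ℝ) ^ (ε / 2) ≤ 1 + ε / 2 := by
    simpa [one_add_one_eq_two] using
      rpow_one_add_le_one_add_mul_self (s := 1) (by norm_num) (by positivity) (by linarith)
  have hexp : Real.logb 2 x ≤ ε / 2 * n :=
    calc Real.logb 2 x = ε / 2 * ((2 / ε) * Real.logb 2 x) := by field_simp
      _ ≤ ε / 2 * n := by gcongr; exact Nat.le_ceil _
  calc x = 2 ^ Real.logb 2 x := (Real.rpow_logb (by norm_num) (by norm_num) hx).symm
    _ ≤ 2 ^ (ε / 2 * n) := Real.rpow_le_rpow_of_exponent_le (by norm_num) hexp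
    _ = (2 ^ (ε / 2)) ^ n := by rw [Real.rpow_mul (by norm_num), Real.rpow_natCast]
    _ ≤ (1 + ε / 2) ^ n := pow_le_pow_left₀ (by positivity) hbase n

theorem pow_ceil_logb_mul_le_one {ε : ℝ} (hε0 : 0 < ε) (hε2 : ε ≤ 2) (x : ℝ) :
    (2 / (2 + ε)) ^ ⌈(2 / ε) * Real.logb 2 x⌉₊ * x ≤ 1 := by
  rcases le_or_gt x 0 with hx | hx
  · have : 0 ≤ (2 / (2 + ε)) ^ ⌈(2 / ε) * Real.logb 2 x⌉₊ := by positivity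
    nlinarith
  have hrw : 2 / (2 + ε) = (1 + ε / 2)⁻¹ := by field_simp
  rw [hrw, inv_pow, inv_mul_le_iff₀ (by positivity), mul_one]
  exact le_one_add_half_pow_ceil_logb hε0 hε2 hx

/-- For `0 < ε ≤ 2` there is a constant `C` (depending only on `ε`) such that for every
finite graph `G` with arboricity `a ≥ 2` on `n` vertices, after
`i = ⌈(2/ε)·log₂ a⌉` iterations of removing all vertices of degree at most `(2+ε)·a`,
the remaining graph `G_i` has at most `(2/(2+ε))^i · n · a ≤ C·n` edges. -/
theorem stmt5 (ε : ℝ) (hε0 : 0 < ε) (hε2 : ε ≤ 2) :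
    ∃ C : ℝ, ∀ (V : Type) (_ : Fintype V) (_ : DecidableEq V)
      (G : SimpleGraph V) (_ : DecidableRel G.Adj) (a : ℕ),
      arboricity G = a → 2 ≤ a →
      (inducedEdgeCount G (peel G a ε (⌈(2 / ε) * Real.logb 2 a⌉₊)) : ℝ) ≤
          (2 / (2 + ε)) ^ (⌈(2 / ε) * Real.logb 2 a⌉₊) * (Fintype.card V : ℝ) * a ∧
        (2 / (2 + ε)) ^ (⌈(2 / ε) * Real.logb 2 a⌉₊) * (Fintype.card V : ℝ) * a ≤
          C * (Fintype.card V : ℝ) := by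
  refine ⟨1, fun V _ _ G _ a ha ha2 => ?_⟩
  set i := ⌈(2 / ε) * Real.logb 2 a⌉₊
  have hG : ∀ S, inducedEdgeCount G S ≤ a * #S :=
    inducedEdgeCount_le_mul_card (ha ▸ hasForestDecomp_arboricity G)
  have hpeel := card_peel_le_pow (ε := ε) hG (by omega) (by linarith) i
  constructor
  · calc (inducedEdgeCount G (peel G a ε i) : ℝ) ≤ a * #(peel G a ε i) := by exact_mod_cast hG _
      _ ≤ a * ((2 / (2 + ε)) ^ i * Fintype.card V) := by gcongr
      _ = _ := by ring
  · calc _ = (2 / (2 + ε)) ^ i * a * Fintype.card V := by ring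
      _ ≤ 1 * Fintype.card V := by gcongr; exact pow_ceil_logb_mul_le_one hε0 hε2 a
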